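/- If p(x) is a nontrivial polynomial set map of binomial type, then for every finite S, p_S(x) = ∑_{σ ⊢ S} x^{ℓ(σ)} ∏_{T ∈ σ} p'_T(0), where p'_T denotes the derivative of p_T. -/
import Mathlib


open scoped Classical
open Polynomial

noncomputable section

/-- The set of set partitions of a finite set `S`. -/
def partitions {V : Type*} [DecidableEq V] (S : Finset V) :
    Finset (Finset (Finset V)) :=
  S.powerset.powerset.filter
    (fun P => (∀ T ∈ P, T ≠ ∅) ∧ P.sup id = S ∧
      ∀ T ∈ P, ∀ U ∈ P, T ≠ U → Disjoint T U)

/-- A polynomial set map is of binomial type if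
`p_S(x+y) = ∑_{T ⊎ U = S} p_T(x) p_U(y)`. -/
def BinomialType {V K : Type*} [DecidableEq V] [Field K] [CharZero K]
    (p : Finset V → Polynomial K) : Prop :=
  ∀ S : Finset V, ∀ x y : K,
    (p S).eval (x + y) = ∑ T ∈ S.powerset, (p T).eval x * (p (S \ T)).eval y

section Aux

set_option linter.unusedSectionVars false

variable {V : Type*} [DecidableEq V]
lemma mem_partitions {S : Finset V} {P : Finset (Finset V)} :
    P ∈ partitions S ↔ P ⊆ S.powerset ∧ (∀ T ∈ P, T ≠ ∅) ∧ P.sup id = S ∧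
      ∀ T ∈ P, ∀ U ∈ P, T ≠ U → Disjoint T U := by
  simp [partitions, Finset.mem_filter, Finset.mem_powerset, and_assoc]

lemma block_subset {S : Finset V} {P : Finset (Finset V)} {B : Finset V}
    (hP : P ∈ partitions S) (hB : B ∈ P) : B ⊆ S := by
  have := (mem_partitions.mp hP).1 hB
  simpa [Finset.mem_powerset] using this

lemma partitions_empty : partitions (∅ : Finset V) = {∅} := by
  ext P
  simp only [mem_partitions, Finset.mem_singleton]
  constructor
  · rintro ⟨h1, h2, h3, h4⟩
    by_contra hne
    obtain ⟨B, hB⟩ := Finset.nonempty_iff_ne_empty.mpr hne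
    have hBsub : B ⊆ (∅ : Finset V) := by simpa [Finset.mem_powerset] using h1 hB
    exact h2 B hB (Finset.subset_empty.mp hBsub)
  · rintro rfl
    refine ⟨by simp, by simp, by simp, by simp⟩

lemma nonempty_of_mem_partitions {S : Finset V} {P : Finset (Finset V)}
    (hP : P ∈ partitions S) (hS : S ≠ ∅) : P ≠ ∅ := by
  rintro rfl
  exact hS ((mem_partitions.mp hP).2.2.1.symm ▸ rfl)

lemma erase_mem_partitions {S : Finset V} {P : Finset (Finset V)} {B : Finset V}
    (hP : P ∈ partitions S) (hB : B ∈ P) : P.erase B ∈ partitions (S \ B) := by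
  obtain ⟨h1, h2, h3, h4⟩ := mem_partitions.mp hP
  have hsub : ∀ T ∈ P.erase B, T ⊆ S \ B := by
    intro T hT
    obtain ⟨hTB, hTP⟩ := Finset.mem_erase.mp hT
    have : T ⊆ S := by simpa [Finset.mem_powerset] using h1 hTP
    exact Finset.subset_sdiff.mpr ⟨this, h4 T hTP B hB hTB⟩
  refine mem_partitions.mpr ⟨?_, ?_, ?_, ?_⟩
  · intro T hT; simpa [Finset.mem_powerset] using hsub T hT
  · intro T hT; exact h2 T (Finset.mem_of_mem_erase hT)
  · apply le_antisymm
    · exact Finset.sup_le fun T hT => by simpa using hsub T hT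
    · intro x hx
      obtain ⟨hxS, hxB⟩ := Finset.mem_sdiff.mp hx
      have : x ∈ P.sup id := h3 ▸ hxS
      obtain ⟨T, hTP, hxT⟩ := Finset.mem_sup.mp this
      refine Finset.mem_sup.mpr ⟨T, Finset.mem_erase.mpr ⟨?_, hTP⟩, hxT⟩
      rintro rfl; exact hxB hxT
  · intro T hT U hU hne
    exact h4 T (Finset.mem_of_mem_erase hT) U (Finset.mem_of_mem_erase hU) hne

lemma insert_mem_partitions {S U : Finset V} {P' : Finset (Finset V)}
    (hU : U ≠ ∅) (hUS : U ⊆ S) (hP' : P' ∈ partitions (S \ U)) :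
    U ∉ P' ∧ insert U P' ∈ partitions S := by
  obtain ⟨h1, h2, h3, h4⟩ := mem_partitions.mp hP'
  have hblock : ∀ T ∈ P', T ⊆ S \ U := fun T hT => by
    simpa [Finset.mem_powerset] using h1 hT
  have hUnot : U ∉ P' := by
    intro hmem
    have : U ⊆ S \ U := hblock U hmem
    have : U = ∅ := by
      rw [← Finset.subset_empty]
      intro x hx
      exact absurd hx (Finset.mem_sdiff.mp (this hx)).2
    exact hU this
  refine ⟨hUnot, mem_partitions.mpr ⟨?_, ?_, ?_, ?_⟩⟩
  · intro T hT
    rcases Finset.mem_insert.mp hT with rfl | hT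
    · simpa [Finset.mem_powerset] using hUS
    · simp only [Finset.mem_powerset]
      exact (hblock T hT).trans (Finset.sdiff_subset)
  · intro T hT
    rcases Finset.mem_insert.mp hT with rfl | hT
    · exact hU
    · exact h2 T hT
  · rw [Finset.sup_insert, h3]
    simpa using Finset.union_sdiff_of_subset hUS
  · intro T hT W hW hne
    have hT' := Finset.mem_insert.mp hT
    have hW' := Finset.mem_insert.mp hW
    clear hT hW
    rcases hT' with hTU | hTP
    · rcases hW' with hWU | hWP
      · exact absurd (hTU.trans hWU.symm) hne
      · subst hTU; exact Finset.disjoint_sdiff.mono_right (hblock W hWP)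
    · rcases hW' with hWU | hWP
      · subst hWU; exact Finset.sdiff_disjoint.mono_left (hblock T hTP)
      · exact h4 T hTP W hWP hne
variable {K : Type*} [Field K] [CharZero K]

lemma q_deriv (c : Finset V → K) (S : Finset V) :
    derivative (∑ P ∈ partitions S, C (∏ T ∈ P, c T) * X ^ P.card)
      = ∑ T ∈ S.powerset.erase S,
          C (c (S \ T)) * ∑ P ∈ partitions T, C (∏ B ∈ P, c B) * X ^ P.card := by
  rw [derivative_sum]
  have lhs : ∀ P ∈ partitions S,
      derivative (C (∏ T ∈ P, c T) * X ^ P.card)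
        = ∑ B ∈ P, C (∏ T ∈ P, c T) * X ^ (P.card - 1) := by
    intro P _
    rw [Finset.sum_const, nsmul_eq_mul, derivative_C_mul, derivative_X_pow,
      map_natCast]
    ring
  rw [Finset.sum_congr rfl lhs, Finset.sum_sigma']
  have rhs : ∀ T ∈ S.powerset.erase S,
      C (c (S \ T)) * ∑ P ∈ partitions T, C (∏ B ∈ P, c B) * X ^ P.card
        = ∑ P ∈ partitions T, C (c (S \ T) * ∏ B ∈ P, c B) * X ^ P.card := by
    intro T _
    rw [Finset.mul_sum]
    refine Finset.sum_congr rfl fun P _ => ?_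
    rw [map_mul]; ring
  rw [Finset.sum_congr rfl rhs, Finset.sum_sigma']
  refine Finset.sum_bij' (fun x _ => ⟨S \ x.2, x.1.erase x.2⟩)
    (fun y _ => ⟨insert (S \ y.1) y.2, S \ y.1⟩) ?_ ?_ ?_ ?_ ?_
  · rintro ⟨P, B⟩ hx
    dsimp only at *
    obtain ⟨hP, hB⟩ := Finset.mem_sigma.mp hx
    have hBS : B ⊆ S := block_subset hP hB
    refine Finset.mem_sigma.mpr ⟨?_, ?_⟩
    swap
    · show P.erase B ∈ partitions (S \ B)
      exact erase_mem_partitions hP hB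
    show S \ B ∈ S.powerset.erase S
    refine Finset.mem_erase.mpr ⟨?_, Finset.mem_powerset.mpr Finset.sdiff_subset⟩
    intro h
    have hBne : B ≠ ∅ := (mem_partitions.mp hP).2.1 B hB
    obtain ⟨x, hxB⟩ := Finset.nonempty_iff_ne_empty.mpr hBne
    rw [← h] at hBS
    exact (Finset.mem_sdiff.mp (hBS hxB)).2 hxB
  · rintro ⟨T, P'⟩ hy
    dsimp only at *
    obtain ⟨hT, hP'⟩ := Finset.mem_sigma.mp hy
    obtain ⟨hTS, hTsub⟩ := Finset.mem_erase.mp hT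
    rw [Finset.mem_powerset] at hTsub
    have hUne : S \ T ≠ ∅ := by
      intro h
      exact hTS (le_antisymm hTsub (by simpa [Finset.sdiff_eq_empty_iff_subset] using h))
    have hrw : S \ (S \ T) = T := Finset.sdiff_sdiff_eq_self hTsub
    have h2 := insert_mem_partitions hUne Finset.sdiff_subset (by rw [hrw]; exact hP')
    refine Finset.mem_sigma.mpr ⟨?_, ?_⟩
    · show insert (S \ T) P' ∈ partitions S
      exact h2.2
    · show S \ T ∈ insert (S \ T) P'
      exact Finset.mem_insert_self _ _
  · rintro ⟨P, B⟩ hx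
    dsimp only at *
    obtain ⟨hP, hB⟩ := Finset.mem_sigma.mp hx
    have hBS : B ⊆ S := block_subset hP hB
    have hrw : S \ (S \ B) = B := Finset.sdiff_sdiff_eq_self hBS
    simp only [hrw]
    rw [Finset.insert_erase hB]
  · rintro ⟨T, P'⟩ hy
    dsimp only at *
    obtain ⟨hT, hP'⟩ := Finset.mem_sigma.mp hy
    obtain ⟨hTS, hTsub⟩ := Finset.mem_erase.mp hT
    rw [Finset.mem_powerset] at hTsub
    have hUne : S \ T ≠ ∅ := by
      intro h
      exact hTS (le_antisymm hTsub (by simpa [Finset.sdiff_eq_empty_iff_subset] using h))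
    have hrw : S \ (S \ T) = T := Finset.sdiff_sdiff_eq_self hTsub
    have hnot := (insert_mem_partitions hUne Finset.sdiff_subset
      (by rw [hrw]; exact hP')).1
    simp only [hrw]
    rw [Finset.erase_insert hnot]
  · rintro ⟨P, B⟩ hx
    dsimp only at *
    obtain ⟨hP, hB⟩ := Finset.mem_sigma.mp hx
    have hBS : B ⊆ S := block_subset hP hB
    have hrw : S \ (S \ B) = B := Finset.sdiff_sdiff_eq_self hBS
    simp only [hrw]
    rw [← Finset.mul_prod_erase P c hB, Finset.card_erase_of_mem hB]
variable {p : Finset V → Polynomial K}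

lemma p_eval_zero (hp : BinomialType p) (hp1 : p ∅ = 1) :
    ∀ S : Finset V, S ≠ ∅ → (p S).eval 0 = 0 := by
  intro S
  induction S using Finset.strongInduction with
  | _ S ih =>
    intro hS
    have h := hp S 0 0
    rw [add_zero] at h
    have hzero : ∀ T ∈ S.powerset, T ∉ ({∅, S} : Finset (Finset V)) →
        (p T).eval 0 * (p (S \ T)).eval 0 = 0 := by
      intro T hT hT2
      simp only [Finset.mem_insert, Finset.mem_singleton, not_or] at hT2
      have hTS : T ⊂ S := lt_of_le_of_ne (Finset.mem_powerset.mp hT) hT2.2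
      rw [ih T hTS hT2.1, zero_mul]
    have hsub : ({∅, S} : Finset (Finset V)) ⊆ S.powerset := by
      intro T hT
      simp only [Finset.mem_insert, Finset.mem_singleton] at hT
      rcases hT with rfl | rfl <;> simp
    rw [← Finset.sum_subset hsub hzero, Finset.sum_pair (Ne.symm hS)] at h
    simp only [hp1, Finset.sdiff_empty, Finset.sdiff_self, eval_one, one_mul,
      mul_one] at h
    have h2 : (p S).eval 0 + (p S).eval 0 = (p S).eval 0 + 0 := by
      rw [add_zero]; exact h.symm
    exact add_left_cancel h2

lemma p_deriv (hp : BinomialType p) (S : Finset V) :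
    derivative (p S)
      = ∑ T ∈ S.powerset, C ((derivative (p (S \ T))).eval 0) * p T := by
  apply Polynomial.funext
  intro x
  have h1 : (p S).comp (C x + X) = ∑ T ∈ S.powerset, C ((p T).eval x) * p (S \ T) := by
    apply Polynomial.funext
    intro y
    rw [eval_comp]
    simp only [eval_add, eval_C, eval_X, eval_finset_sum, eval_mul]
    exact hp S x y
  have h2 := congrArg derivative h1
  rw [derivative_comp] at h2
  have h3 := congrArg (eval 0) h2
  simp only [derivative_add, derivative_C, derivative_X, zero_add, one_mul,
    eval_mul, eval_comp, eval_add, eval_C, eval_X, add_zero, derivative_sum,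
    derivative_C_mul, eval_finset_sum, eval_one] at h3
  rw [h3, eval_finset_sum]
  exact Finset.sum_congr rfl fun T hT => by simp [mul_comm]

lemma p_deriv' (hp : BinomialType p) (hp1 : p ∅ = 1) (S : Finset V) :
    derivative (p S)
      = ∑ T ∈ S.powerset.erase S, C ((derivative (p (S \ T))).eval 0) * p T := by
  rw [p_deriv hp S, ← Finset.add_sum_erase _ _ (Finset.mem_powerset_self S)]
  simp [hp1]

theorem binomialType_monomial_expansion' :
    BinomialType p → p ∅ = 1 →
    ∀ S : Finset V,
      p S = ∑ P ∈ partitions S,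
        Polynomial.C (∏ T ∈ P, (Polynomial.derivative (p T)).eval 0) * X ^ P.card := by
  intro hp hp1 S
  induction S using Finset.strongInduction with
  | _ S ih =>
    by_cases hS : S = ∅
    · subst hS
      rw [partitions_empty, Finset.sum_singleton]
      simp [hp1]
    · have hd : derivative (p S)
          = derivative (∑ P ∈ partitions S,
              C (∏ T ∈ P, (derivative (p T)).eval 0) * X ^ P.card) := by
        rw [q_deriv (fun T => (derivative (p T)).eval 0) S, p_deriv' hp hp1 S]
        refine Finset.sum_congr rfl fun T hT => ?_
        obtain ⟨hTS, hTsub⟩ := Finset.mem_erase.mp hT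
        rw [Finset.mem_powerset] at hTsub
        rw [ih T (lt_of_le_of_ne hTsub hTS)]
      have h0 : (p S).eval 0 = 0 := p_eval_zero hp hp1 S hS
      have hq0 : (∑ P ∈ partitions S,
          C (∏ T ∈ P, (derivative (p T)).eval 0) * X ^ P.card).eval 0 = 0 := by
        rw [eval_finset_sum]
        refine Finset.sum_eq_zero fun P hP => ?_
        have hPne : P ≠ ∅ := nonempty_of_mem_partitions hP hS
        have hcard : P.card ≠ 0 := by simpa [Finset.card_eq_zero] using hPne
        simp [zero_pow hcard]
      have hder : derivative (p S - ∑ P ∈ partitions S,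
          C (∏ T ∈ P, (derivative (p T)).eval 0) * X ^ P.card) = 0 := by
        rw [derivative_sub, hd, sub_self]
      have h := Polynomial.eq_C_of_derivative_eq_zero hder
      rw [Polynomial.coeff_zero_eq_eval_zero, eval_sub, h0, hq0, sub_self,
        map_zero, sub_eq_zero] at h
      exact h

end Aux

/-- Expansion in powers of `x`:
`p_S(x) = ∑_{σ ⊢ S} x^{ℓ(σ)} ∏_{T ∈ σ} p'_T(0)`. -/
theorem binomialType_monomial_expansion {V K : Type*} [DecidableEq V] [Field K]
    [CharZero K] (p : Finset V → Polynomial K) (hp : BinomialType p)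
    (hp1 : p ∅ = 1) :
    ∀ S : Finset V,
      p S = ∑ P ∈ partitions S,
        Polynomial.C (∏ T ∈ P, (Polynomial.derivative (p T)).eval 0) * X ^ P.card := by
  exact binomialType_monomial_expansion' hp hp1
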